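/- Substitution lemma for the symbolic sum-based typed norm: if t is a term with variables, σ is a closed substitution, and every variable x of t satisfies T ∈ deptypes(type(x)), then evaluating the symbolic norm ‖t‖_T^Σ (a linear expression in variables X_T) under the assignment X_T ↦ ‖σ(x)‖_T^Σ yields exactly the closed norm ‖tσ‖_T^Σ, for any non-Int type label T. -/

import Mathlib

/-- Terms with variables (and no integer leaves): a variable, or a
constructor application carrying a type label. -/
inductive VTm (V L : Type) : Type
  | var : V → VTm V L
  | node : L → List (VTm V L) → VTm V L

namespace VTm
variable {V L : Type}

/-- Applying a substitution `σ` to a term. -/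
def subst (σ : V → VTm V L) : VTm V L → VTm V L
  | var x => σ x
  | node l cs => node l (cs.attach.map fun c => subst σ c.1)
decreasing_by all_goals (simp_wf; have := List.sizeOf_lt_of_mem c.2; simp +arith [VTm.node.sizeOf_spec] <;> omega)

/-- Closed sum-based typed norm wrt `T` (meant for variable-free terms; the
variable case is junk): `‖Co(t̄)‖_T^Σ = (if ty(Co)=T then 1 else 0) + Σᵢ‖tᵢ‖_T^Σ`. -/
def csum [DecidableEq L] (T : L) : VTm V L → ℕ
  | var _ => 0
  | node l cs => (if l = T then 1 else 0) + (cs.attach.map fun c => csum T c.1).sum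
decreasing_by all_goals (simp_wf; have := List.sizeOf_lt_of_mem c.2; simp +arith [VTm.node.sizeOf_spec] <;> omega)

open Classical in
/-- The symbolic sum-based typed norm, evaluated under an assignment `ρ` that
maps each formal size variable `X_{x,T}` to an integer value `ρ x T`:
a variable `x` is abstracted to `X_{x,T}` when `T ∈ deptypes(type x)` and to
`0` otherwise; constructor cases are as in the closed norm.  (Evaluation is
the homomorphic extension to the linear expression the symbolic norm denotes.) -/
noncomputable def symEval [DecidableEq L] (type : V → L) (dep : L → Set L)
    (ρ : V → L → ℕ) (T : L) : VTm V L → ℕ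
  | var x => if T ∈ dep (type x) then ρ x T else 0
  | node l cs =>
    (if l = T then 1 else 0) +
      (cs.attach.map fun c => symEval type dep ρ T c.1).sum
decreasing_by all_goals (simp_wf; have := List.sizeOf_lt_of_mem c.2; simp +arith [VTm.node.sizeOf_spec] <;> omega)

/-- `Closed t`: the term `t` contains no variables. -/
inductive Closed : VTm V L → Prop
  | node (l : L) (cs : List (VTm V L)) :
      (∀ c ∈ cs, Closed c) → Closed (node l cs)

/-- `OccVar x t`: the variable `x` occurs in `t`. -/
inductive OccVar (x : V) : VTm V L → Prop
  | here : OccVar x (var x)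
  | there {l : L} {cs : List (VTm V L)} {c : VTm V L} :
      c ∈ cs → OccVar x c → OccVar x (node l cs)

end VTm

namespace VTm
variable {V L : Type}

theorem subst_node (σ : V → VTm V L) (l : L) (cs : List (VTm V L)) :
    subst σ (node l cs) = node l (cs.map (subst σ)) := by
  rw [subst, List.attach_map_val]

theorem csum_node [DecidableEq L] (T l : L) (cs : List (VTm V L)) :
    csum T (node l cs) = (if l = T then 1 else 0) + (cs.map (csum T)).sum := by
  rw [csum, List.attach_map_val]

theorem symEval_node [DecidableEq L] (type : V → L) (dep : L → Set L) (ρ : V → L → ℕ)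
    (T l : L) (cs : List (VTm V L)) :
    symEval type dep ρ T (node l cs) =
      (if l = T then 1 else 0) + (cs.map (symEval type dep ρ T)).sum := by
  rw [symEval, List.attach_map_val]

end VTm

theorem symNorm_subst_general {V L : Type} [DecidableEq L]
    (type : V → L) (dep : L → Set L) (σ : V → VTm V L)
    (T : L) (t : VTm V L)
    (ht : ∀ x : V, VTm.OccVar x t → T ∈ dep (type x)) :
    VTm.symEval type dep (fun x T' => VTm.csum T' (σ x)) T t =
      VTm.csum T (VTm.subst σ t) := by
  induction t using VTm.symEval.induct type dep T with
  | case1 x hx => rw [VTm.symEval, VTm.subst, if_pos hx]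
  | case2 x hx => exact absurd (ht x .here) hx
  | case3 l cs ih =>
    rw [VTm.symEval_node, VTm.subst_node, VTm.csum_node, List.map_map]
    congr 2
    exact List.map_congr_left fun c hc => ih ⟨c, hc⟩ fun x hx => ht x (.there hc hx)

/-- Substitution lemma: if `σ` is a closed substitution and every variable `x`
occurring in `t` satisfies `T ∈ deptypes(type x)`, then evaluating the symbolic
sum-based norm of `t` under the assignment `X_{x,T} ↦ ‖σ(x)‖_T^Σ` yields the
closed sum-based norm of `tσ`. -/
theorem symNorm_subst {V L : Type} [DecidableEq L]
    (type : V → L) (dep : L → Set L) (σ : V → VTm V L)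
    (hσ : ∀ x : V, VTm.Closed (σ x)) (T : L) (t : VTm V L)
    (ht : ∀ x : V, VTm.OccVar x t → T ∈ dep (type x)) :
    VTm.symEval type dep (fun x T' => VTm.csum T' (σ x)) T t =
      VTm.csum T (VTm.subst σ t) :=
  symNorm_subst_general type dep σ T t ht
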